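/- arXiv:0708.2230 — 4 statements merged into one kernel-verified Lean document; each statement's English description precedes it below -/
import Mathlib

section
/- If Sort t s is derivable from the program clauses, then (↑t : Multiset α) = ↑s; that is, the multisets of items underlying the input list t and the output list s are equal, so the sorting program neither drops, duplicates, nor creates any elements. -/
inductive AppendP {α : Type*} : List α → List α → List α → Prop
  | nil (k : List α) : AppendP [] k k
  | cons (x : α) {l k m : List α} : AppendP l k m → AppendP (x :: l) k (x :: m)

inductive Split {α : Type*} (leq gr : α → α → Prop) :
    α → List α → List α → List α → Prop
  | nil (x : α) : Split leq gr x [] [] []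
  | small {a x : α} {r s b : List α} :
      leq a x → Split leq gr x r s b → Split leq gr x (a :: r) (a :: s) b
  | big {a x : α} {r s b : List α} :
      gr a x → Split leq gr x r s b → Split leq gr x (a :: r) s (a :: b)

inductive SortP {α : Type*} (leq gr : α → α → Prop) : List α → List α → Prop
  | nil : SortP leq gr [] []
  | cons {f : α} {r sm bg ss bs s : List α} :
      Split leq gr f r sm bg → SortP leq gr sm ss → SortP leq gr bg bs →
      AppendP ss (f :: bs) s → SortP leq gr (f :: r) s

/-!
Each clause of the program preserves the elements of its lists up to order: `Append` computes
`l ++ k`, `Split` distributes its input over the two outputs, and the recursive `Sort` clause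
reassembles `f :: r` as `ss ++ f :: bs`, which is a permutation of it by the induction
hypotheses. Equality of the underlying multisets is exactly permutation of the lists.
-/

section

open List

variable {α : Type*} {leq gr : α → α → Prop}

theorem AppendP.append_eq {l k m : List α} (h : AppendP l k m) : l ++ k = m := by
  induction h with
  | nil => rfl
  | cons _ _ ih => rw [cons_append, ih]

theorem Split.perm_append {x : α} {r s b : List α}
    (h : Split leq gr x r s b) : r ~ s ++ b := by
  induction h with
  | nil => rfl
  | small _ _ ih => exact ih.cons _
  | big _ _ ih => exact (ih.cons _).trans perm_middle.symm

theorem SortP.perm {t s : List α} (h : SortP leq gr t s) : t ~ s := by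
  induction h with
  | nil => rfl
  | @cons f r sm bg ss bs s hsplit _ _ happ ihsm ihbg =>
    rw [← happ.append_eq]
    calc f :: r ~ f :: (sm ++ bg) := hsplit.perm_append.cons f
      _ ~ f :: (ss ++ bs) := (ihsm.append ihbg).cons f
      _ ~ ss ++ f :: bs := perm_middle.symm

end

theorem sort_multiset_invariant {α : Type*} (leq gr : α → α → Prop)
    {t s : List α} (h : SortP leq gr t s) : (↑t : Multiset α) = ↑s :=
  Multiset.coe_eq_coe.mpr h.perm
end

section
/- If Sort' t s is derivable from the duplicate-dropping sorting program clauses, then t.toFinset = s.toFinset; that is, the sets of items underlying the input list t and the output list s are equal, so the duplicate-dropping sort relates two lists only if they are approximated by the same set. -/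
inductive Split' {α : Type*} (lt gr : α → α → Prop) :
    α → List α → List α → List α → Prop
  | nil (x : α) : Split' lt gr x [] [] []
  | drop {x : α} {r s b : List α} :
      Split' lt gr x r s b → Split' lt gr x (x :: r) s b
  | small {a x : α} {r s b : List α} :
      lt a x → Split' lt gr x r s b → Split' lt gr x (a :: r) (a :: s) b
  | big {a x : α} {r s b : List α} :
      gr a x → Split' lt gr x r s b → Split' lt gr x (a :: r) s (a :: b)

inductive SortP' {α : Type*} (lt gr : α → α → Prop) : List α → List α → Prop
  | nil : SortP' lt gr [] []
  | cons {f : α} {r sm bg ss bs s : List α} :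
      Split' lt gr f r sm bg → SortP' lt gr sm ss → SortP' lt gr bg bs →
      AppendP ss (f :: bs) s → SortP' lt gr (f :: r) s

theorem AppendP.eq_append {α : Type*} {l k m : List α} (h : AppendP l k m) : m = l ++ k := by
  induction h with
  | nil k => rfl
  | cons x _ ih => rw [ih, List.cons_append]

/-- Split' only drops copies of the pivot, so up to the pivot it partitions the set of elements. -/
theorem Split'.insert_toFinset {α : Type*} [DecidableEq α] {lt gr : α → α → Prop}
    {x : α} {r s b : List α} (h : Split' lt gr x r s b) :
    insert x r.toFinset = insert x (s.toFinset ∪ b.toFinset) := by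
  induction h with
  | nil x => rfl
  | drop _ ih => rw [List.toFinset_cons, Finset.insert_idem, ih]
  | small _ _ ih =>
      rw [List.toFinset_cons, List.toFinset_cons, Finset.insert_comm, ih, Finset.insert_union,
        Finset.insert_comm]
  | big _ _ ih =>
      rw [List.toFinset_cons, List.toFinset_cons, Finset.insert_comm, ih, Finset.union_insert,
        Finset.insert_comm]

theorem sort'_finset_invariant {α : Type*} [DecidableEq α] (lt gr : α → α → Prop)
    {t s : List α} (h : SortP' lt gr t s) : t.toFinset = s.toFinset := by
  induction h with
  | nil => rfl
  | @cons f r sm bg ss bs s hsplit _ _ happend ih_sm ih_bg =>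
      calc (f :: r).toFinset
          _ = insert f (sm.toFinset ∪ bg.toFinset) := by
            rw [List.toFinset_cons, hsplit.insert_toFinset]
          _ = insert f (ss.toFinset ∪ bs.toFinset) := by rw [ih_sm, ih_bg]
          _ = s.toFinset := by
            rw [happend.eq_append, List.toFinset_append, List.toFinset_cons, Finset.union_insert]
end

section
/- If Traverse t s is derivable from the program clauses, then inorder t = s; that is, the list produced by the rotation-based traversal program is exactly the in-order list of labels of the binary tree, with the same order and multiplicities of elements. -/
inductive BTree (α : Type*)
  | emp : BTree α
  | bt : α → BTree α → BTree α → BTree α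

def inorder {α : Type*} : BTree α → List α
  | BTree.emp => []
  | BTree.bt n l r => inorder l ++ n :: inorder r

inductive Traverse {α : Type*} : BTree α → List α → Prop
  | emp : Traverse BTree.emp []
  | leaf {n : α} {r : BTree α} {s : List α} :
      Traverse r s → Traverse (BTree.bt n BTree.emp r) (n :: s)
  | rot {m n : α} {l1 l2 r : BTree α} {s : List α} :
      Traverse (BTree.bt m l1 (BTree.bt n l2 r)) s →
      Traverse (BTree.bt n (BTree.bt m l1 l2) r) s

theorem inorder_rotate {α : Type*} (m n : α) (l1 l2 r : BTree α) :
    inorder (BTree.bt n (BTree.bt m l1 l2) r) = inorder (BTree.bt m l1 (BTree.bt n l2 r)) := by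
  simp only [inorder, List.append_assoc, List.cons_append]

theorem traverse_inorder {α : Type*} {t : BTree α} {s : List α}
    (h : Traverse t s) : inorder t = s := by
  induction h with
  | emp => rfl
  | leaf _ ih => rw [inorder, inorder, ih, List.nil_append]
  | rot _ ih => rw [inorder_rotate, ih]
end

section
/- Soundness of the Figure 5 proof system for set statements (ground case of Propositions 2 and 3): if every rule (U, V) ∈ Γ satisfies U ⊆ V, then DerSet S T implies S ⊆ T for all finite sets S, T of atoms. -/
inductive DerAtom {A : Type*} [DecidableEq A] (Γ : Set (Finset A × Finset A)) :
    A → Finset A → Prop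
  | oplusR {a : A} {T : Finset A} : a ∈ T → DerAtom Γ a T
  | bc {U V : Finset A} {a : A} {T : Finset A} :
      (U, V) ∈ Γ → a ∈ U → (∀ b ∈ V, DerAtom Γ b T) → DerAtom Γ a T

def DerSet {A : Type*} [DecidableEq A] (Γ : Set (Finset A × Finset A))
    (S T : Finset A) : Prop :=
  ∀ a ∈ S, DerAtom Γ a T

theorem DerAtom.mem {A : Type*} [DecidableEq A] {Γ : Set (Finset A × Finset A)}
    (hΓ : ∀ p ∈ Γ, p.1 ⊆ p.2) {a : A} {T : Finset A} (h : DerAtom Γ a T) : a ∈ T := by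
  induction h with
  | oplusR ha => exact ha
  | bc hUV haU _ ih => exact ih _ (hΓ _ hUV haU)

theorem derSet_sound {A : Type*} [DecidableEq A] (Γ : Set (Finset A × Finset A))
    (hΓ : ∀ p ∈ Γ, p.1 ⊆ p.2) :
    ∀ S T : Finset A, DerSet Γ S T → S ⊆ T :=
  fun _ _ hST _ ha => (hST _ ha).mem hΓ
end
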